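/- For the M = 4 testing problem with qubit states τ₁ = |0⟩⟨0|, τ₂ = |+⟩⟨+|, τ₃ = |−⟩⟨−|, τ₄ = I/2 and priors p₁ = 2/5, p₂ = p₃ = p₄ = 1/5, the POVM Π₁ = [[8/9,0],[0,0]], Π₂ = [[1/18,1/6],[1/6,1/2]], Π₃ = [[1/18,−1/6],[−1/6,1/2]], Π₄ = 0 is a valid POVM whose average error probability equals 7/15, and it satisfies the Holevo–Yuen–Kennedy–Lax optimality conditions (hence ε* = 7/15). -/

import Mathlib

/-!
Holevo–Yuen–Kennedy–Lax sufficiency: if every `Λ - p m • τ m` is positive semidefinite, then for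
any POVM `Q`, since `∑ m, Q m = 1`,
`tr Λ - ∑ m, p m * tr (τ m * Q m) = ∑ m, tr ((Λ - p m • τ m) * Q m) ≥ 0`,
because the trace of a product of positive semidefinite matrices is nonnegative. So no POVM
succeeds with probability above `tr Λ`, and a POVM `E` with `Λ = ∑ i, p i • (τ i * E i)` attains
it. Here `Λ = diag (2/5, 2/15)`, so the optimal error is `1 - 8/15 = 7/15`.
-/

open ComplexOrder Matrix

namespace Matrix

variable {n 𝕜 : Type*} [Fintype n] [RCLike 𝕜]

theorem IsHermitian.posSemidef_of_trace_nonneg_of_det_nonneg {A : Matrix (Fin 2) (Fin 2) 𝕜}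
    (hA : A.IsHermitian) (htr : 0 ≤ A.trace) (hdet : 0 ≤ A.det) : A.PosSemidef := by
  rw [hA.posSemidef_iff_eigenvalues_nonneg]
  rw [hA.trace_eq_sum_eigenvalues, Fin.sum_univ_two, ← RCLike.ofReal_add,
    RCLike.ofReal_nonneg] at htr
  rw [hA.det_eq_prod_eigenvalues, Fin.prod_univ_two, ← RCLike.ofReal_mul,
    RCLike.ofReal_nonneg] at hdet
  simp only [Pi.le_def, Fin.forall_fin_two, Pi.zero_apply]
  constructor <;> nlinarith

theorem PosSemidef.trace_mul_nonneg {A B : Matrix n n 𝕜} (hA : A.PosSemidef)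
    (hB : B.PosSemidef) : 0 ≤ (A * B).trace := by
  classical
  open scoped MatrixOrder in
  obtain ⟨C, rfl⟩ := CStarAlgebra.nonneg_iff_eq_star_mul_self.mp hB.nonneg
  rw [← Matrix.mul_assoc, Matrix.trace_mul_cycle]
  exact (hA.mul_mul_conjTranspose_same C).trace_nonneg

theorem IsHermitian.mul_eq_zero_swap {α : Type*} [Semiring α] [StarRing α] {A B : Matrix n n α}
    (hA : A.IsHermitian) (hB : B.IsHermitian) (h : A * B = 0) : B * A = 0 := by
  rw [← hA.eq, ← hB.eq, ← conjTranspose_mul, h, conjTranspose_zero]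

end Matrix

section Discrimination

variable {ι n 𝕜 : Type*} [Fintype ι] [Fintype n] [RCLike 𝕜]

theorem trace_sum_smul_mul (p : ι → 𝕜) (τ Q : ι → Matrix n n 𝕜) :
    (∑ i, p i • (τ i * Q i)).trace = ∑ i, p i * (τ i * Q i).trace := by
  simp only [trace_sum, trace_smul, smul_eq_mul]

theorem sum_mul_trace_le_trace [DecidableEq n] {p : ι → 𝕜} {τ Q : ι → Matrix n n 𝕜}
    {Λ : Matrix n n 𝕜} (hgap : ∀ m, (Λ - p m • τ m).PosSemidef)
    (hQ : ∀ i, (Q i).PosSemidef) (hQsum : ∑ i, Q i = 1) :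
    ∑ m, p m * (τ m * Q m).trace ≤ Λ.trace := by
  have hsplit : ∑ m, ((Λ - p m • τ m) * Q m).trace
      = Λ.trace - ∑ m, p m * (τ m * Q m).trace := by
    simp only [sub_mul, trace_sub, smul_mul_assoc, trace_smul, smul_eq_mul,
      Finset.sum_sub_distrib, ← trace_sum, ← Matrix.mul_sum, hQsum, Matrix.mul_one]
  rw [← sub_nonneg, ← hsplit]
  exact Finset.sum_nonneg fun m _ => (hgap m).trace_mul_nonneg (hQ m)

theorem isLeast_error_of_posSemidef_sub [DecidableEq n] {p : ι → 𝕜} {τ E : ι → Matrix n n 𝕜}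
    (hE : ∀ i, (E i).PosSemidef) (hEsum : ∑ i, E i = 1)
    (hgap : ∀ m, (∑ i, p i • (τ i * E i) - p m • τ m).PosSemidef) :
    IsLeast {e : 𝕜 | ∃ Q : ι → Matrix n n 𝕜, (∀ i, (Q i).PosSemidef) ∧ (∑ i, Q i = 1) ∧
        e = 1 - ∑ m, p m * (τ m * Q m).trace}
      (1 - ∑ m, p m * (τ m * E m).trace) := by
  refine ⟨⟨E, hE, hEsum, rfl⟩, ?_⟩
  rintro e ⟨Q, hQ, hQsum, rfl⟩
  rw [← trace_sum_smul_mul]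
  exact sub_le_sub_left (sum_mul_trace_le_trace hgap hQ hQsum) 1

end Discrimination

noncomputable section

def qubitStates : Fin 4 → Matrix (Fin 2) (Fin 2) ℂ :=
  ![!![1, 0; 0, 0], !![1/2, 1/2; 1/2, 1/2], !![1/2, -1/2; -1/2, 1/2], !![1/2, 0; 0, 1/2]]

def qubitPriors : Fin 4 → ℂ := ![2/5, 1/5, 1/5, 1/5]

def qubitPOVM : Fin 4 → Matrix (Fin 2) (Fin 2) ℂ :=
  ![!![8/9, 0; 0, 0], !![1/18, 1/6; 1/6, 1/2], !![1/18, -1/6; -1/6, 1/2], 0]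

def qubitLagrangeOp : Matrix (Fin 2) (Fin 2) ℂ := !![2/5, 0; 0, 2/15]

theorem sum_smul_qubitStates_mul_qubitPOVM :
    ∑ i, qubitPriors i • (qubitStates i * qubitPOVM i) = qubitLagrangeOp := by
  norm_num [Fin.sum_univ_four, qubitPriors, qubitStates, qubitPOVM, qubitLagrangeOp, cons_val_two,
    cons_val_three]

theorem sum_qubitPOVM : ∑ i, qubitPOVM i = 1 := by
  rw [Fin.sum_univ_four, one_fin_two]
  norm_num [qubitPOVM, cons_val_two, cons_val_three]

theorem isHermitian_qubitLagrangeOp : qubitLagrangeOp.IsHermitian := by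
  norm_num [qubitLagrangeOp, IsHermitian, ← Matrix.ext_iff, Fin.forall_fin_two, map_ofNat]

theorem posSemidef_qubitPOVM (i : Fin 4) : (qubitPOVM i).PosSemidef := by
  fin_cases i <;> refine IsHermitian.posSemidef_of_trace_nonneg_of_det_nonneg ?_ ?_ ?_ <;>
    norm_num [qubitPOVM, IsHermitian, ← Matrix.ext_iff, Fin.forall_fin_two, map_ofNat,
      trace_fin_two, det_fin_two] <;>
    positivity

theorem posSemidef_qubitLagrangeOp_sub (m : Fin 4) :
    (qubitLagrangeOp - qubitPriors m • qubitStates m).PosSemidef := by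
  fin_cases m <;> refine IsHermitian.posSemidef_of_trace_nonneg_of_det_nonneg ?_ ?_ ?_ <;>
    norm_num [qubitLagrangeOp, qubitPriors, qubitStates, IsHermitian, ← Matrix.ext_iff,
      Fin.forall_fin_two, map_ofNat, trace_fin_two, det_fin_two] <;>
    positivity

theorem qubitLagrangeOp_sub_mul_qubitPOVM (m : Fin 4) :
    (qubitLagrangeOp - qubitPriors m • qubitStates m) * qubitPOVM m = 0 := by
  ext i j
  fin_cases m <;> fin_cases i <;> fin_cases j <;>
    norm_num [qubitLagrangeOp, qubitPriors, qubitStates, qubitPOVM, mul_apply, Fin.sum_univ_two]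

theorem qubitPOVM_mul_qubitLagrangeOp_sub (m : Fin 4) :
    qubitPOVM m * (qubitLagrangeOp - qubitPriors m • qubitStates m) = 0 :=
  (posSemidef_qubitLagrangeOp_sub m).isHermitian.mul_eq_zero_swap
    (posSemidef_qubitPOVM m).isHermitian (qubitLagrangeOp_sub_mul_qubitPOVM m)

end

/-- Example 1: for the four qubit states `τ₁ = |0⟩⟨0|`, `τ₂ = |+⟩⟨+|`, `τ₃ = |−⟩⟨−|`,
`τ₄ = I/2` with priors `2/5, 1/5, 1/5, 1/5`, the given POVM is valid, has average
error probability `7/15`, and satisfies the Holevo–Yuen–Kennedy–Lax conditions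
(hence `ε* = 7/15`). -/
theorem example_qht :
    let τ : Fin 4 → Matrix (Fin 2) (Fin 2) ℂ :=
      ![!![1, 0; 0, 0],
        !![1/2, 1/2; 1/2, 1/2],
        !![1/2, -1/2; -1/2, 1/2],
        !![1/2, 0; 0, 1/2]]
    let p : Fin 4 → ℂ := ![2/5, 1/5, 1/5, 1/5]
    let Pov : Fin 4 → Matrix (Fin 2) (Fin 2) ℂ :=
      ![!![8/9, 0; 0, 0],
        !![1/18, 1/6; 1/6, 1/2],
        !![1/18, -1/6; -1/6, 1/2],
        0]
    let Λ : Matrix (Fin 2) (Fin 2) ℂ := ∑ i, p i • (τ i * Pov i)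
    (∀ i, (Pov i).PosSemidef) ∧
    (∑ i, Pov i = 1) ∧
    (1 - ∑ i, p i * (τ i * Pov i).trace = 7/15) ∧
    Λ.IsHermitian ∧
    (∀ m, (Λ - p m • τ m) * Pov m = 0) ∧
    (∀ m, Pov m * (Λ - p m • τ m) = 0) ∧
    (∀ m, (Λ - p m • τ m).PosSemidef) ∧
    IsLeast {e : ℂ | ∃ Q : Fin 4 → Matrix (Fin 2) (Fin 2) ℂ,
        (∀ i, (Q i).PosSemidef) ∧ (∑ i, Q i = 1) ∧
        e = 1 - ∑ m, p m * (τ m * Q m).trace}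
      (7/15) := by
  intro τ p Pov Λ
  have hΛ : Λ = qubitLagrangeOp := sum_smul_qubitStates_mul_qubitPOVM
  have hgap : ∀ m, (Λ - p m • τ m).PosSemidef := hΛ ▸ posSemidef_qubitLagrangeOp_sub
  have herr : 1 - ∑ i, p i * (τ i * Pov i).trace = 7/15 := by
    rw [← trace_sum_smul_mul]
    change 1 - Λ.trace = 7/15
    norm_num [hΛ, qubitLagrangeOp, trace_fin_two]
  refine ⟨posSemidef_qubitPOVM, sum_qubitPOVM, herr, hΛ ▸ isHermitian_qubitLagrangeOp,
    hΛ ▸ qubitLagrangeOp_sub_mul_qubitPOVM, hΛ ▸ qubitPOVM_mul_qubitLagrangeOp_sub, hgap, ?_⟩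
  exact herr ▸ isLeast_error_of_posSemidef_sub posSemidef_qubitPOVM sum_qubitPOVM hgap
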